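/- arXiv:cs/0507034 — 2 statements merged into one kernel-verified Lean document; each statement's English description precedes it below -/
import Mathlib

section
/- In the network B_clockwise(κ,m) with m ≥ 2, for every node u and every target t with 0 < δ_clockwise(u,t) < m, the unique neighbor of u minimizing δ_clockwise(·,t) is (u+1) mod n, the endpoint of u's short link. Consequently, if δ_clockwise(u,t) < m then the greedy route from u reaches t in exactly δ_clockwise(u,t) hops, each along a short link. -/
/-!
Moving `x` steps clockwise lowers the clockwise distance to `t` by `x` modulo `n`. The short link
(`x = 1`) therefore brings a target at distance `0 < d < m` to distance `d - 1`, while a long link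
jumps `x` with `m < x ≤ n`, overshooting `t` and landing at distance `d + n - x ≥ d`. So the short
link is the unique greedy choice, and by induction the greedy walk stays on short links, losing
one unit of distance per hop, until it reaches `t` after `d` hops.
-/

/-- The clockwise distance `(v - u) mod n` between two nodes on a ring of `n` nodes. -/
def clockDelta (n : ℕ) (u v : Fin n) : ℕ := ((v : ℕ) + n - (u : ℕ)) % n

/-- The level `ℓ(u) = (m-1) - (u mod m)` of a node. -/
def clockLevel (m : ℕ) {n : ℕ} (u : Fin n) : ℕ := (m - 1) - ((u : ℕ) % m)

/-- The directed edges of the Papillon network `B_clockwise(κ, m)` on `n = κ^m * m` nodes: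
`u` links to `(u + x) mod n` for `x ∈ {1 + i·m·κ^{ℓ(u)} : 0 ≤ i < κ}`. -/
def clockEdge (κ m : ℕ) (u v : Fin (κ ^ m * m)) : Prop :=
  ∃ i < κ, (v : ℕ) = ((u : ℕ) + (1 + i * m * κ ^ clockLevel m u)) % (κ ^ m * m)

/-- `v` is a greedy next hop from `u` towards target `t` with respect to `δ_clockwise`:
`v` is a neighbor of `u` minimizing the clockwise distance to `t` among `u`'s neighbors. -/
def clockGreedyStep (κ m : ℕ) (t u v : Fin (κ ^ m * m)) : Prop :=
  clockEdge κ m u v ∧ ∀ v', clockEdge κ m u v' →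
    clockDelta (κ ^ m * m) v t ≤ clockDelta (κ ^ m * m) v' t

section clockDelta

variable {n : ℕ}

lemma clockDelta_eq_emod (u t : Fin n) : (clockDelta n u t : ℤ) = ((t : ℤ) - u) % n := by
  rw [clockDelta, Int.natCast_mod, Nat.cast_sub (by omega), Nat.cast_add, add_sub_right_comm,
    Int.add_emod_right]

lemma clockDelta_lt (u t : Fin n) : clockDelta n u t < n :=
  Nat.mod_lt _ u.pos

lemma clockDelta_eq_zero_iff {u t : Fin n} : clockDelta n u t = 0 ↔ u = t := by
  rw [← Int.natCast_inj, clockDelta_eq_emod, Nat.cast_zero, ← Int.dvd_iff_emod_eq_zero]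
  constructor
  · intro hdvd
    have := Int.eq_zero_of_abs_lt_dvd hdvd (by rw [abs_lt]; omega)
    omega
  · rintro rfl
    simp

lemma clockDelta_of_val_eq_add_mod {u v : Fin n} (t : Fin n) {x : ℕ}
    (hv : (v : ℕ) = ((u : ℕ) + x) % n) :
    (clockDelta n v t : ℤ) = ((clockDelta n u t : ℤ) - x) % n := by
  rw [clockDelta_eq_emod, clockDelta_eq_emod, hv, Int.natCast_mod]
  change Int.ModEq n _ _
  push_cast
  calc (t : ℤ) - ((u : ℤ) + x) % n ≡ t - (u + x) [ZMOD n] := (Int.mod_modEq _ _).sub_left _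
    _ = (t - u) - x := by ring
    _ ≡ (t - u) % n - x [ZMOD n] := ((Int.mod_modEq _ _).symm).sub_right _

lemma clockDelta_of_val_eq_add_mod_of_le {u v t : Fin n} {x : ℕ}
    (hv : (v : ℕ) = ((u : ℕ) + x) % n) (hx : x ≤ clockDelta n u t) :
    clockDelta n v t = clockDelta n u t - x := by
  have h := clockDelta_of_val_eq_add_mod t hv
  rw [Int.emod_eq_of_lt (by omega) (by have := clockDelta_lt u t; omega)] at h
  omega

lemma clockDelta_of_val_eq_add_mod_of_lt {u v t : Fin n} {x : ℕ}
    (hv : (v : ℕ) = ((u : ℕ) + x) % n) (hx : clockDelta n u t < x) (hxn : x ≤ n) :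
    clockDelta n v t = clockDelta n u t + n - x := by
  have h := clockDelta_of_val_eq_add_mod t hv
  rw [← Int.add_emod_right, Int.emod_eq_of_lt (by omega) (by omega)] at h
  omega

end clockDelta

lemma clockLevel_lt {m n : ℕ} (hm : 0 < m) (u : Fin n) : clockLevel m u < m := by
  unfold clockLevel
  omega

lemma one_add_mul_pow_le {κ m i ℓ : ℕ} (hi : i < κ) (hℓ : ℓ < m) :
    1 + i * m * κ ^ ℓ ≤ κ ^ m * m := by
  have hpow : 1 ≤ κ ^ ℓ := Nat.one_le_pow _ _ (by omega)
  calc 1 + i * m * κ ^ ℓ ≤ m * ((i + 1) * κ ^ ℓ) := by nlinarith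
    _ ≤ m * κ ^ (ℓ + 1) := by rw [pow_succ']; gcongr; omega
    _ ≤ κ ^ m * m := by rw [mul_comm]; gcongr <;> omega

lemma lt_one_add_mul_pow {κ m i ℓ : ℕ} (hi : 0 < i) (hκ : 0 < κ) : m < 1 + i * m * κ ^ ℓ := by
  have : 1 * m * 1 ≤ i * m * κ ^ ℓ := by gcongr <;> [omega; exact Nat.one_le_pow _ _ hκ]
  omega

section papillon

variable {κ m : ℕ}

lemma clockEdge_of_val_eq_succ_mod (hκ : 0 < κ) {u v : Fin (κ ^ m * m)}
    (hv : (v : ℕ) = ((u : ℕ) + 1) % (κ ^ m * m)) : clockEdge κ m u v :=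
  ⟨0, hκ, by simpa using hv⟩

lemma clockEdge.val_eq_succ_mod_or_clockDelta_le {u v t : Fin (κ ^ m * m)}
    (huv : clockEdge κ m u v) (ht : clockDelta _ u t < m) :
    (v : ℕ) = ((u : ℕ) + 1) % (κ ^ m * m) ∨ clockDelta _ u t ≤ clockDelta _ v t := by
  obtain ⟨i, hi, hv⟩ := huv
  rcases i.eq_zero_or_pos with rfl | hi0
  · left
    simpa using hv
  · right
    have hlong : m < 1 + i * m * κ ^ clockLevel m u := lt_one_add_mul_pow hi0 (by omega)
    have hxn : 1 + i * m * κ ^ clockLevel m u ≤ κ ^ m * m :=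
      one_add_mul_pow_le hi (clockLevel_lt (by omega) u)
    rw [clockDelta_of_val_eq_add_mod_of_lt hv (by omega) hxn]
    exact Nat.le_sub_of_add_le (Nat.add_le_add_left hxn _)

lemma clockGreedyStep_iff {u t v : Fin (κ ^ m * m)} (h0 : 0 < clockDelta _ u t)
    (hm : clockDelta _ u t < m) :
    clockGreedyStep κ m t u v ↔ (v : ℕ) = ((u : ℕ) + 1) % (κ ^ m * m) := by
  have hκ : 0 < κ := Nat.pos_of_ne_zero fun hκ => by
    have := u.pos
    simp [hκ, zero_pow (n := m) (by omega)] at this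
  let s : Fin (κ ^ m * m) := ⟨((u : ℕ) + 1) % (κ ^ m * m), Nat.mod_lt _ u.pos⟩
  have hs : clockDelta _ s t = clockDelta _ u t - 1 := clockDelta_of_val_eq_add_mod_of_le rfl h0
  have hs_le : ∀ v', clockEdge κ m u v' → clockDelta _ u t - 1 ≤ clockDelta _ v' t := by
    intro v' huv'
    rcases huv'.val_eq_succ_mod_or_clockDelta_le hm with hv' | hle
    · rw [clockDelta_of_val_eq_add_mod_of_le hv' h0]
    · omega
  constructor
  · rintro ⟨huv, hv_le⟩
    refine (huv.val_eq_succ_mod_or_clockDelta_le hm).resolve_right fun hle => ?_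
    have := hv_le s (clockEdge_of_val_eq_succ_mod hκ rfl)
    omega
  · intro hv
    refine ⟨clockEdge_of_val_eq_succ_mod hκ hv, fun v' huv' => ?_⟩
    rw [clockDelta_of_val_eq_add_mod_of_le hv h0]
    exact hs_le v' huv'

lemma clockDelta_greedy_walk {t : Fin (κ ^ m * m)} {w : ℕ → Fin (κ ^ m * m)}
    (hm : clockDelta _ (w 0) t < m)
    (hstep : ∀ j, w j ≠ t → clockGreedyStep κ m t (w j) (w (j + 1)))
    {j : ℕ} (hj : j ≤ clockDelta _ (w 0) t) :
    clockDelta _ (w j) t = clockDelta _ (w 0) t - j := by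
  induction j with
  | zero => rfl
  | succ j ih =>
    have hpos : 0 < clockDelta _ (w j) t := by rw [ih (by omega)]; omega
    have hne : w j ≠ t := clockDelta_eq_zero_iff.not.mp hpos.ne'
    have hsucc := (clockGreedyStep_iff hpos (by omega)).mp (hstep j hne)
    rw [clockDelta_of_val_eq_add_mod_of_le hsucc hpos, ih (by omega)]
    omega

end papillon

theorem clockwise_greedy_short_links_general (κ m : ℕ) :
    (∀ u t v : Fin (κ ^ m * m),
      0 < clockDelta (κ ^ m * m) u t → clockDelta (κ ^ m * m) u t < m →
      (clockGreedyStep κ m t u v ↔ (v : ℕ) = ((u : ℕ) + 1) % (κ ^ m * m))) ∧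
    (∀ u t : Fin (κ ^ m * m), ∀ w : ℕ → Fin (κ ^ m * m),
      clockDelta (κ ^ m * m) u t < m → w 0 = u →
      (∀ j, w j ≠ t → clockGreedyStep κ m t (w j) (w (j + 1))) →
      w (clockDelta (κ ^ m * m) u t) = t ∧
        ∀ j < clockDelta (κ ^ m * m) u t,
          w j ≠ t ∧ (w (j + 1) : ℕ) = ((w j : ℕ) + 1) % (κ ^ m * m)) := by
  refine ⟨fun u t v => clockGreedyStep_iff, ?_⟩
  rintro u t w hm rfl hstep
  have hwalk {j} (hj : j ≤ clockDelta _ (w 0) t) := clockDelta_greedy_walk hm hstep hj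
  refine ⟨clockDelta_eq_zero_iff.mp (by rw [hwalk le_rfl, Nat.sub_self]), fun j hj => ?_⟩
  have hwj := hwalk hj.le
  have hpos : 0 < clockDelta _ (w j) t := by omega
  have hne : w j ≠ t := clockDelta_eq_zero_iff.not.mp hpos.ne'
  exact ⟨hne, (clockGreedyStep_iff hpos (by omega)).mp (hstep j hne)⟩

/-- In `B_clockwise(κ, m)` with `m ≥ 2`: (1) if `0 < δ_clockwise(u, t) < m` then the unique
greedy next hop from `u` towards `t` is `(u + 1) mod n`, the endpoint of `u`'s short link;
(2) consequently, if `δ_clockwise(u, t) < m` then the greedy route from `u` reaches `t` in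
exactly `δ_clockwise(u, t)` hops, each along a short link. -/
theorem clockwise_greedy_short_links (κ m : ℕ) (hκ : 1 ≤ κ) (hm : 2 ≤ m) :
    (∀ u t v : Fin (κ ^ m * m),
      0 < clockDelta (κ ^ m * m) u t → clockDelta (κ ^ m * m) u t < m →
      (clockGreedyStep κ m t u v ↔ (v : ℕ) = ((u : ℕ) + 1) % (κ ^ m * m))) ∧
    (∀ u t : Fin (κ ^ m * m), ∀ w : ℕ → Fin (κ ^ m * m),
      clockDelta (κ ^ m * m) u t < m → w 0 = u →
      (∀ j, w j ≠ t → clockGreedyStep κ m t (w j) (w (j + 1))) →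
      w (clockDelta (κ ^ m * m) u t) = t ∧
        ∀ j < clockDelta (κ ^ m * m) u t,
          w j ≠ t ∧ (w (j + 1) : ℕ) = ((w j : ℕ) + 1) % (κ ^ m * m)) :=
  clockwise_greedy_short_links_general κ m
end

section
/- In the undirected graph underlying the network B_absolute(k,m), for every pair of nodes (s,t) there exists a path from s to t of length at most m + ⌊m/2⌋; moreover, the average over all ordered pairs (s,t) of the length of the shortest such path is at most 1.25m. -/
/-- Number of nodes of the Papillon network `B_absolute(k, m)`. -/
def absN (k m : ℕ) : ℕ := (2 * k + 1) ^ m * m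

/-- The absolute distance `min((v - u) mod n, (u - v) mod n)` on a ring of `n` nodes. -/
def absDelta (n : ℕ) (u v : Fin n) : ℕ :=
  min (((v : ℕ) + n - (u : ℕ)) % n) (((u : ℕ) + n - (v : ℕ)) % n)

/-- The level `ℓ(u) = (m-1) - (u mod m)` of a node. -/
def absLevel (m : ℕ) {n : ℕ} (u : Fin n) : ℕ := (m - 1) - ((u : ℕ) % m)

/-- The `2k+1` "forward" links of `B_absolute(k, m)`: `u` links to `(u + x) mod n` for
`x ∈ {1 + i·m·(2k+1)^{ℓ(u)} : -k ≤ i ≤ k}`. -/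
def absForwardEdge (k m : ℕ) (u v : Fin (absN k m)) : Prop :=
  ∃ i : ℤ, -(k : ℤ) ≤ i ∧ i ≤ (k : ℤ) ∧
    ((v : ℕ) : ℤ) =
      (((u : ℕ) : ℤ) + (1 + i * (m : ℤ) * ((2 * (k : ℤ) + 1)) ^ absLevel m u)) %
        ((absN k m : ℕ) : ℤ)

/-- The "back edge" of `B_absolute(k, m)`: `u` links to `(u + x) mod n` for `x = -m + 1`. -/
def absBackEdge (k m : ℕ) (u v : Fin (absN k m)) : Prop :=
  ((v : ℕ) : ℤ) = (((u : ℕ) : ℤ) + (1 - (m : ℤ))) % ((absN k m : ℕ) : ℤ)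

/-- The directed edges of `B_absolute(k, m)`. -/
def absEdge (k m : ℕ) (u v : Fin (absN k m)) : Prop :=
  absForwardEdge k m u v ∨ absBackEdge k m u v

/-- `v` is a greedy next hop from `u` towards target `t` with respect to `δ_absolute`:
`v` is a neighbor of `u` minimizing the absolute distance to `t` among `u`'s neighbors. -/
def absGreedyStep (k m : ℕ) (t u v : Fin (absN k m)) : Prop :=
  absEdge k m u v ∧ ∀ v', absEdge k m u v' →
    absDelta (absN k m) v t ≤ absDelta (absN k m) v' t

/-- The undirected graph underlying `B_absolute(k, m)`: `{u, v}` is an edge whenever `u`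
has an out-going link to `v` or `v` has an out-going link to `u`. -/
def absUndirEdge (k m : ℕ) (u v : Fin (absN k m)) : Prop :=
  absEdge k m u v ∨ absEdge k m v u

/-!
Only forward links are needed. In `m` consecutive forward steps from `s` the levels run through
`0, …, m-1` exactly once, so choosing the multipliers `i ∈ [-k, k]` as the balanced base-`(2k+1)`
digits of a suitable integer shifts the position by any prescribed multiple of `m` modulo
`n = m·(2k+1)^m`. Hence every `L ≥ m` with `L ≡ t - s (mod m)` is the length of a directed walk
from `s` to `t`. Going from `s` to `t`, or reversing a walk from `t` to `s`, gives a path of length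
`m + min(r, m - r)` with `r = (t - s) mod m`; this is at most `m + ⌊m/2⌋`, and as `t` varies `r` is
equidistributed, with `∑_{r<m} min(r, m - r) ≤ m²/4`.
-/

open Finset

theorem exists_balanced_digits (k m : ℕ) (E : ℤ) :
    ∃ d : ℕ → ℤ, (∀ ℓ, |d ℓ| ≤ k) ∧
      ∑ ℓ ∈ range m, d ℓ * (2 * k + 1) ^ ℓ ≡ E [ZMOD (2 * k + 1) ^ m] := by
  induction m generalizing E with
  | zero => exact ⟨0, by simp, Int.modEq_one⟩
  | succ m ih =>
    set b : ℤ := 2 * k + 1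
    obtain ⟨d, hd, hdE⟩ := ih ((E + k) / b)
    have hdiv : E + k = b * ((E + k) / b) + (E + k) % b := (Int.mul_ediv_add_emod _ _).symm
    have hrem : 0 ≤ (E + k) % b ∧ (E + k) % b < b :=
      ⟨Int.emod_nonneg _ (by omega), Int.emod_lt_of_pos _ (by omega)⟩
    refine ⟨fun | 0 => (E + k) % b - k | ℓ + 1 => d ℓ, ?_, ?_⟩
    · rintro (_ | ℓ)
      · show |(E + k) % b - k| ≤ k
        exact abs_le.2 ⟨by omega, by omega⟩
      · exact hd ℓ
    · have hsum : ∑ ℓ ∈ range m, d ℓ * b ^ (ℓ + 1) = b * ∑ ℓ ∈ range m, d ℓ * b ^ ℓ := by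
        rw [mul_sum]; exact sum_congr rfl fun ℓ _ => by ring
      rw [sum_range_succ', hsum, pow_succ', pow_zero, mul_one]
      have := (hdE.mul_left' (c := b)).add_right ((E + k) % b - k)
      convert this using 1
      linear_combination hdiv

theorem sum_range_comp_sub_one_sub_add_mod {M : Type*} [AddCommMonoid M] (m s : ℕ)
    (f : ℕ → M) : ∑ j ∈ range m, f (m - 1 - (s + j) % m) = ∑ ℓ ∈ range m, f ℓ := by
  rcases Nat.eq_zero_or_pos m with rfl | hm
  · simp
  have : NeZero m := ⟨hm.ne'⟩
  rw [← Fin.sum_univ_eq_sum_range, ← Fin.sum_univ_eq_sum_range]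
  refine .trans (Fintype.sum_congr _ _ fun j => ?_)
    (((Equiv.addLeft (Fin.ofNat m s)).trans Fin.revPerm).sum_comp fun ℓ => f ℓ)
  simp only [Equiv.trans_apply, Equiv.coe_addLeft, Fin.revPerm_apply, Fin.val_rev, Fin.val_add,
    Fin.val_ofNat, Nat.mod_add_mod]
  rw [Nat.sub_sub, Nat.add_comm 1]

theorem Fin.eq_of_intCast_modEq {n : ℕ} {u v : Fin n}
    (h : ((u : ℕ) : ℤ) ≡ (v : ℕ) [ZMOD n]) : u = v :=
  Fin.ext (Nat.ModEq.eq_of_lt_of_lt (Int.natCast_modEq_iff.1 h) u.isLt v.isLt)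

theorem Fin.exists_intCast_modEq {n : ℕ} (hn : 0 < n) (x : ℤ) :
    ∃ v : Fin n, ((v : ℕ) : ℤ) ≡ x [ZMOD n] := by
  have h0 : 0 ≤ x % n := Int.emod_nonneg _ (by omega)
  have h1 : x % n < n := Int.emod_lt_of_pos _ (by omega)
  refine ⟨⟨(x % n).toNat, by omega⟩, ?_⟩
  simp [Int.ModEq, Int.toNat_of_nonneg h0]

theorem sum_fin_mul_comp_natCast {M : Type*} [AddCommMonoid M] (q m : ℕ) [NeZero m]
    (F : ZMod m → M) : ∑ t : Fin (q * m), F ((t : ℕ) : ZMod m) = q • ∑ x : ZMod m, F x := by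
  rw [← finProdFinEquiv.sum_comp, Fintype.sum_prod_type]
  simp only [finProdFinEquiv_apply_val, Nat.cast_add, Nat.cast_mul, ZMod.natCast_self, zero_mul,
    add_zero, sum_const, card_univ, Fintype.card_fin]
  obtain ⟨m, rfl⟩ := Nat.exists_eq_succ_of_ne_zero (NeZero.ne m)
  exact congrArg _ (Fintype.sum_congr _ _ fun r => congrArg F (Fin.cast_val_eq_self r))

theorem ZMod.sum_comp_val {M : Type*} [AddCommMonoid M] (m : ℕ) [NeZero m] (f : ℕ → M) :
    ∑ x : ZMod m, f x.val = ∑ r ∈ range m, f r := by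
  obtain ⟨m, rfl⟩ := Nat.exists_eq_succ_of_ne_zero (NeZero.ne m)
  exact Fin.sum_univ_eq_sum_range f _

theorem four_mul_sum_range_min_sub_le (m : ℕ) : 4 * ∑ r ∈ range m, min r (m - r) ≤ m * m := by
  induction m using Nat.twoStepInduction with
  | zero => simp
  | one => simp
  | more m ih _ =>
    have hshift : ∀ r ∈ range m, min (r + 1) (m + 2 - (r + 1)) = min r (m - r) + 1 :=
      fun r hr => by have := mem_range.1 hr; omega
    rw [sum_range_succ, sum_range_succ', sum_congr rfl hshift, sum_add_distrib, sum_const,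
      card_range, smul_eq_mul, mul_one, Nat.zero_min,
      show min (m + 1) (m + 2 - (m + 1)) = 1 by omega]
    nlinarith

def AbsUndirWalk (k m L : ℕ) (s t : Fin (absN k m)) : Prop :=
  ∃ w : ℕ → Fin (absN k m), w 0 = s ∧ w L = t ∧ ∀ j < L, absUndirEdge k m (w j) (w (j + 1))

noncomputable def absUndirDist (k m : ℕ) (s t : Fin (absN k m)) : ℕ :=
  sInf {L | AbsUndirWalk k m L s t}

variable {k m : ℕ}

theorem absForwardEdge_of_modEq {u v : Fin (absN k m)} {i : ℤ} (hi : |i| ≤ k)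
    (h : ((v : ℕ) : ℤ) ≡ (u : ℕ) + (1 + i * m * (2 * k + 1) ^ absLevel m u) [ZMOD absN k m]) :
    absForwardEdge k m u v := by
  refine ⟨i, (abs_le.1 hi).1, (abs_le.1 hi).2, ?_⟩
  rw [← h, Int.emod_eq_of_lt (by positivity) (by exact_mod_cast v.isLt)]

theorem exists_forward_walk (s t : Fin (absN k m)) {L : ℕ} (hL : m ≤ L)
    (hLst : (L : ℤ) ≡ (t : ℕ) - (s : ℕ) [ZMOD m]) :
    ∃ w : ℕ → Fin (absN k m),
      w 0 = s ∧ w L = t ∧ ∀ j < L, absForwardEdge k m (w j) (w (j + 1)) := by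
  obtain ⟨E, hE⟩ := hLst.dvd
  obtain ⟨d, hd, hdE⟩ := exists_balanced_digits k m E
  set b : ℤ := 2 * k + 1
  have hn : ((absN k m : ℕ) : ℤ) = m * b ^ m := by simp [absN, b, mul_comm]
  set lev : ℕ → ℕ := fun j => m - 1 - ((s : ℕ) + j) % m
  -- `lev j` is the level of the `j`-th node of the walk; the first `m` steps meet every level
  -- once and carry the digits, the remaining steps are `+1` steps.
  set D : ℕ → ℤ := fun j => if j < m then d (lev j) else 0
  set X : ℕ → ℤ := fun j => (s : ℕ) + j + m * ∑ i ∈ range j, D i * b ^ lev i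
  choose w hw using fun j => Fin.exists_intCast_modEq s.pos (X j)
  have hlev : ∀ j, absLevel m (w j) = lev j := by
    intro j
    have h : ((w j : ℕ) : ℤ) ≡ ((s + j : ℕ) : ℤ) [ZMOD m] :=
      ((hw j).of_dvd ⟨b ^ m, hn⟩).trans (by simp [X, Int.ModEq])
    simp only [absLevel, lev]
    congr 1
    exact Int.natCast_modEq_iff.1 h
  have hXL : X L ≡ (t : ℕ) [ZMOD absN k m] := by
    have hsum : ∑ i ∈ range L, D i * b ^ lev i = ∑ ℓ ∈ range m, d ℓ * b ^ ℓ := by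
      rw [← sum_range_add_sum_Ico _ hL, sum_eq_zero (s := Ico m L) fun i hi => by
        simp [D, (mem_Ico.1 hi).1], add_zero,
        ← sum_range_comp_sub_one_sub_add_mod m s fun ℓ => d ℓ * b ^ ℓ]
      exact sum_congr rfl fun i hi => by simp [D, lev, mem_range.1 hi]
    rw [hn]
    calc X L = (s : ℕ) + L + m * ∑ ℓ ∈ range m, d ℓ * b ^ ℓ := by simp only [X, hsum]
      _ ≡ (s : ℕ) + L + m * E [ZMOD m * b ^ m] := (hdE.mul_left' (c := m)).add_left _
      _ = (t : ℕ) := by linear_combination (-1 : ℤ) * hE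
  refine ⟨w, Fin.eq_of_intCast_modEq ((hw 0).trans (by simp [X])),
    Fin.eq_of_intCast_modEq ((hw L).trans hXL), fun j _ => absForwardEdge_of_modEq (i := D j) ?_ ?_⟩
  · by_cases hj : j < m <;> simp [D, hj, hd]
  · rw [hlev j]
    calc ((w (j + 1) : ℕ) : ℤ) ≡ X (j + 1) [ZMOD absN k m] := hw _
      _ = X j + (1 + D j * m * b ^ lev j) := by simp only [X, sum_range_succ]; push_cast; ring
      _ ≡ (w j : ℕ) + (1 + D j * m * b ^ lev j) [ZMOD absN k m] := (hw j).symm.add_right _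

theorem AbsUndirWalk.symm {L : ℕ} {s t : Fin (absN k m)} (h : AbsUndirWalk k m L s t) :
    AbsUndirWalk k m L t s := by
  obtain ⟨w, hw0, hwL, hw⟩ := h
  refine ⟨fun j => w (L - j), by simpa using hwL, by simpa using hw0, fun j hj => ?_⟩
  have hedge := hw (L - (j + 1)) (by omega)
  rw [show L - (j + 1) + 1 = L - j by omega] at hedge
  exact hedge.symm

theorem absUndirWalk_of_modEq (s t : Fin (absN k m)) {L : ℕ} (hL : m ≤ L)
    (hLst : ((L : ℕ) : ZMod m) = (t : ℕ) - (s : ℕ)) : AbsUndirWalk k m L s t := by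
  have hmod : (L : ℤ) ≡ (t : ℕ) - (s : ℕ) [ZMOD m] := by
    rw [← ZMod.intCast_eq_intCast_iff]; push_cast; exact hLst
  obtain ⟨w, hw0, hwL, hw⟩ := exists_forward_walk s t hL hmod
  exact ⟨w, hw0, hwL, fun j hj => .inl (.inl (hw j hj))⟩

theorem neZero_of_fin_absN (s : Fin (absN k m)) : NeZero m :=
  ⟨by rintro rfl; simpa [absN] using s.pos⟩

theorem exists_absUndirWalk_le (s t : Fin (absN k m)) :
    ∃ L ≤ m + min (((t : ℕ) - (s : ℕ) : ZMod m)).val (m - (((t : ℕ) - (s : ℕ) : ZMod m)).val),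
      AbsUndirWalk k m L s t := by
  have := neZero_of_fin_absN s
  set x : ZMod m := (t : ℕ) - (s : ℕ)
  rcases le_total x.val (m - x.val) with h | h
  · refine ⟨m + x.val, by omega, absUndirWalk_of_modEq s t (by omega) ?_⟩
    simp [x]
  · refine ⟨m + (-x).val, ?_, (absUndirWalk_of_modEq t s (by omega) ?_).symm⟩
    · rw [ZMod.neg_val]; split_ifs <;> omega
    · simp [x]

theorem four_mul_sum_absUndirDist_le (s : Fin (absN k m)) :
    4 * ∑ t, absUndirDist k m s t ≤ 5 * (absN k m * m) := by
  have := neZero_of_fin_absN s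
  set G : ZMod m → ℕ := fun x => min x.val (m - x.val)
  have hdist : ∀ t, absUndirDist k m s t ≤ m + G ((t : ℕ) - (s : ℕ)) := fun t =>
    let ⟨_, hL, hw⟩ := exists_absUndirWalk_le s t
    (Nat.sInf_le hw).trans hL
  have hG : ∑ t : Fin (absN k m), G ((t : ℕ) - (s : ℕ)) =
      (2 * k + 1) ^ m * ∑ r ∈ range m, min r (m - r) := by
    refine (sum_fin_mul_comp_natCast ((2 * k + 1) ^ m) m fun x => G (x - (s : ℕ))).trans ?_
    rw [Fintype.sum_equiv (Equiv.subRight _) (fun x => G (x - (s : ℕ))) G fun _ => rfl,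
      ZMod.sum_comp_val m fun r => min r (m - r), smul_eq_mul]
  calc 4 * ∑ t, absUndirDist k m s t
      ≤ 4 * ∑ t : Fin (absN k m), (m + G ((t : ℕ) - (s : ℕ))) := by gcongr with t; exact hdist t
    _ = 4 * (absN k m * m) + (2 * k + 1) ^ m * (4 * ∑ r ∈ range m, min r (m - r)) := by
      rw [sum_add_distrib, hG, sum_const, card_univ, Fintype.card_fin, smul_eq_mul]; ring
    _ ≤ 4 * (absN k m * m) + (2 * k + 1) ^ m * (m * m) :=
      Nat.add_le_add_left (Nat.mul_le_mul_left _ (four_mul_sum_range_min_sub_le m)) _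
    _ = 5 * (absN k m * m) := by rw [absN]; ring

theorem absolute_undirected_routing_general (k m : ℕ) :
    (∀ s t : Fin (absN k m), ∃ L ≤ m + m / 2, ∃ w : ℕ → Fin (absN k m),
      w 0 = s ∧ w L = t ∧ ∀ j < L, absUndirEdge k m (w j) (w (j + 1))) ∧
    (∑ s : Fin (absN k m), ∑ t : Fin (absN k m),
        ((sInf {L : ℕ | ∃ w : ℕ → Fin (absN k m),
          w 0 = s ∧ w L = t ∧ ∀ j < L, absUndirEdge k m (w j) (w (j + 1))} : ℕ) : ℝ)) /
      ((absN k m : ℕ) : ℝ) ^ 2 ≤ (5 / 4 : ℝ) * m := by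
  refine ⟨fun s t => ?_, ?_⟩
  · obtain ⟨L, hL, hw⟩ := exists_absUndirWalk_le s t
    exact ⟨L, by omega, hw⟩
  · have hsum : 4 * ∑ s, ∑ t, absUndirDist k m s t ≤ absN k m * (5 * (absN k m * m)) := by
      simpa [mul_sum] using sum_le_sum fun s (_ : s ∈ univ) => four_mul_sum_absUndirDist_le s
    have hsum' : 4 * ∑ s, ∑ t, (absUndirDist k m s t : ℝ) ≤
        absN k m * (5 * (absN k m * m)) := by exact_mod_cast hsum
    refine div_le_of_le_mul₀ (by positivity) (by positivity) ?_
    change ∑ s, ∑ t, (absUndirDist k m s t : ℝ) ≤ _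
    linarith

/-- In the undirected graph underlying `B_absolute(k, m)`: (1) every pair of nodes is
joined by a path of length at most `m + ⌊m/2⌋`; (2) the average over all ordered pairs
`(s, t)` of the length of the shortest path from `s` to `t` is at most `1.25 m`. -/
theorem absolute_undirected_routing (k m : ℕ) (hk : 1 ≤ k) (hm : 1 ≤ m) :
    (∀ s t : Fin (absN k m), ∃ L ≤ m + m / 2, ∃ w : ℕ → Fin (absN k m),
      w 0 = s ∧ w L = t ∧ ∀ j < L, absUndirEdge k m (w j) (w (j + 1))) ∧
    (∑ s : Fin (absN k m), ∑ t : Fin (absN k m),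
        ((sInf {L : ℕ | ∃ w : ℕ → Fin (absN k m),
          w 0 = s ∧ w L = t ∧ ∀ j < L, absUndirEdge k m (w j) (w (j + 1))} : ℕ) : ℝ)) /
      ((absN k m : ℕ) : ℝ) ^ 2 ≤ (5 / 4 : ℝ) * m :=
  absolute_undirected_routing_general k m
end
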